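/- Let k_1 < ... < k_s enumerate S_n and let M_n be the s × s matrix with entries (M_n)_{ij} = M(⌊n/(k_i k_j)⌋), where M is the Mertens function (with M(0) = 0). Then M_n is symmetric, has all entries 1 on the antidiagonal i + j = s + 1, and all entries 0 strictly below the antidiagonal. -/
import Mathlib


/-- The set of approximate divisors of `n`: distinct values of `⌊n/k⌋` for `1 ≤ k ≤ n`. -/
def Sn (n : ℕ) : Finset ℕ := (Finset.Icc 1 n).image (fun k => n / k)

/-- The increasing enumeration `k_1 < ⋯ < k_s` of `S_n` (0-indexed by `Fin s`). -/
noncomputable def kseq (n : ℕ) : Fin (Sn n).card → ℕ :=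
  fun i => ((Sn n).orderIsoOfFin rfl i : ℕ)

/-- The Mertens function `M(x) = ∑_{1 ≤ j ≤ x} μ(j)`, with `M(0) = 0`. -/
noncomputable def mertens (x : ℕ) : ℤ :=
  ∑ j ∈ Finset.Icc 1 x, ArithmeticFunction.moebius j

/-- Cardinal's Mertens matrix `M_n`, with `(i,j)` entry `M(⌊n/(k_i k_j)⌋)`. -/
noncomputable def Mmat (n : ℕ) : Matrix (Fin (Sn n).card) (Fin (Sn n).card) ℤ :=
  fun i j => mertens (n / (kseq n i * kseq n j))

lemma mem_Sn {n x : ℕ} : x ∈ Sn n ↔ ∃ k, 1 ≤ k ∧ k ≤ n ∧ n / k = x := by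
  simp [Sn, Finset.mem_image, Finset.mem_Icc, and_assoc]

lemma Sn_pos {n x : ℕ} (hx : x ∈ Sn n) : 1 ≤ x := by
  obtain ⟨k, hk1, hkn, rfl⟩ := mem_Sn.mp hx
  exact Nat.one_le_div_iff hk1 |>.mpr hkn

lemma Sn_le {n x : ℕ} (hx : x ∈ Sn n) : x ≤ n := by
  obtain ⟨k, hk1, hkn, rfl⟩ := mem_Sn.mp hx
  exact Nat.div_le_self n k

lemma Sn_div_mem {n x : ℕ} (hx : x ∈ Sn n) : n / x ∈ Sn n :=
  mem_Sn.mpr ⟨x, Sn_pos hx, Sn_le hx, rfl⟩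

lemma Sn_div_div {n x : ℕ} (hx : x ∈ Sn n) : n / (n / x) = x := by
  obtain ⟨k, hk1, hkn, rfl⟩ := mem_Sn.mp hx
  set q := n / k with hq
  have hq1 : 1 ≤ q := Nat.one_le_div_iff hk1 |>.mpr hkn
  set d := n / q with hd
  have hkd : k ≤ d := Nat.le_div_iff_mul_le hq1 |>.mpr (by
    rw [Nat.mul_comm]; exact Nat.div_mul_le_self n k)
  have h1 : n / d ≤ q := hq ▸ Nat.div_le_div_left hkd hk1
  have h2 : q ≤ n / d := by
    have hd1 : 1 ≤ d := hkd.trans' hk1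
    exact Nat.le_div_iff_mul_le hd1 |>.mpr (by
      rw [Nat.mul_comm]; exact Nat.div_mul_le_self n q)
  exact le_antisymm h1 h2

lemma Sn_div_strictAnti {n x y : ℕ} (hx : x ∈ Sn n) (hy : y ∈ Sn n) (hxy : x < y) :
    n / y < n / x := by
  have hle : n / y ≤ n / x := Nat.div_le_div_left hxy.le (Sn_pos hx)
  rcases hle.lt_or_eq with h | h
  · exact h
  · exfalso
    have : x = y := by
      rw [← Sn_div_div hx, ← Sn_div_div hy, h]
    exact hxy.ne this

lemma kseq_rev (n : ℕ) (i : Fin (Sn n).card) :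
    kseq n i.rev = n / kseq n i := by
  set e := (Sn n).orderIsoOfFin rfl with he
  have hmem : ∀ j : Fin (Sn n).card, ((e j : ℕ)) ∈ Sn n := fun j => (e j).2
  set g : Fin (Sn n).card → Fin (Sn n).card :=
    fun j => e.symm ⟨n / (e j : ℕ), Sn_div_mem (hmem j)⟩ with hg
  have hgg : ∀ j, g (g j) = j := by
    intro j
    simp only [hg, OrderIso.apply_symm_apply]
    rw [show (⟨n / ((⟨n / (e j : ℕ), Sn_div_mem (hmem j)⟩ : Sn n) : ℕ),
        _⟩ : Sn n) = e j from Subtype.ext (Sn_div_div (hmem j))]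
    exact e.symm_apply_apply j
  have hganti : StrictAnti g := by
    intro a b hab
    have : n / (e b : ℕ) < n / (e a : ℕ) :=
      Sn_div_strictAnti (hmem a) (hmem b) (by exact_mod_cast e.strictMono hab)
    have : (⟨n / (e b : ℕ), Sn_div_mem (hmem b)⟩ : Sn n) <
        ⟨n / (e a : ℕ), Sn_div_mem (hmem a)⟩ := this
    exact e.symm.strictMono this
  set f : Fin (Sn n).card → Fin (Sn n).card := fun j => g j.rev with hf
  have hfmono : StrictMono f := fun a b hab => hganti (Fin.rev_lt_rev.mpr hab)
  have hfsurj : Function.Surjective f := by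
    intro j
    refine ⟨(g j).rev, ?_⟩
    simp only [hf, Fin.rev_rev]
    exact hgg j
  have hfid : f = id := by
    have := Subsingleton.elim (StrictMono.orderIsoOfSurjective f hfmono hfsurj)
      (OrderIso.refl (Fin (Sn n).card))
    funext j
    have h1 : (StrictMono.orderIsoOfSurjective f hfmono hfsurj) j = j := by
      rw [this]; rfl
    simpa using h1
  have hkey : g i = i.rev := by
    have := congrFun hfid i.rev
    simpa [hf, Fin.rev_rev] using this
  have : e i.rev = ⟨n / (e i : ℕ), Sn_div_mem (hmem i)⟩ := by
    rw [← hkey, hg, OrderIso.apply_symm_apply]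
  unfold kseq
  rw [← he, this]

lemma lt_mul_div_succ (n k : ℕ) (hk : 1 ≤ k) : n < k * (n / k + 1) := by
  have h1 := Nat.div_add_mod n k
  have h2 : n % k < k := Nat.mod_lt n hk
  rw [Nat.mul_add, Nat.mul_one]
  omega

lemma mertens_one : mertens 1 = 1 := by
  simp [mertens]

lemma mertens_zero : mertens 0 = 0 := by
  simp [mertens]

/-- `M_n` is symmetric, has all entries `1` on the antidiagonal and all entries `0`
strictly below the antidiagonal. -/
theorem stmt_9 (n : ℕ) (hn : 0 < n) :
    (Mmat n).IsSymm ∧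
    (∀ i j : Fin (Sn n).card, (i : ℕ) + (j : ℕ) + 1 = (Sn n).card → Mmat n i j = 1) ∧
    (∀ i j : Fin (Sn n).card, (Sn n).card < (i : ℕ) + (j : ℕ) + 1 → Mmat n i j = 0) := by
  have hmem : ∀ i : Fin (Sn n).card, kseq n i ∈ Sn n := fun i =>
    ((Sn n).orderIsoOfFin rfl i).2
  have hpos : ∀ i : Fin (Sn n).card, 1 ≤ kseq n i := fun i => Sn_pos (hmem i)
  refine ⟨?_, ?_, ?_⟩
  · ext i j
    simp [Mmat, Matrix.transpose, Nat.mul_comm]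
  · intro i j hij
    have hj : j = i.rev := by
      apply Fin.ext
      have : (i.rev : ℕ) = (Sn n).card - 1 - i := by simp [Fin.rev]; omega
      omega
    subst hj
    rw [Mmat, kseq_rev]
    set k := kseq n i with hk
    have hk1 : 1 ≤ k := hpos i
    have hq1 : 1 ≤ n / k := Nat.one_le_div_iff hk1 |>.mpr (Sn_le (hmem i))
    have h1 : 1 * (k * (n / k)) ≤ n := by
      rw [Nat.one_mul, Nat.mul_comm]; exact Nat.div_mul_le_self n k
    have h2 : n < (1 + 1) * (k * (n / k)) := by
      have : n < k * (n / k) + k := by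
        have := lt_mul_div_succ n k hk1
        nlinarith
      have hkk : k ≤ k * (n / k) := Nat.le_mul_of_pos_right k hq1
      omega
    rw [Nat.div_eq_of_lt_le h1 h2, mertens_one]
  · intro i j hij
    have hlt : (i.rev : ℕ) < (j : ℕ) := by
      have : (i.rev : ℕ) = (Sn n).card - 1 - i := by simp [Fin.rev]; omega
      omega
    have hklt : kseq n i.rev < kseq n j := by
      have := ((Sn n).orderIsoOfFin rfl).strictMono (show i.rev < j from hlt)
      exact_mod_cast this
    rw [kseq_rev] at hklt
    have hbig : n < kseq n i * kseq n j := by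
      have h1 : n / kseq n i + 1 ≤ kseq n j := hklt
      have h2 : n < kseq n i * (n / kseq n i + 1) := by
        have := lt_mul_div_succ n (kseq n i) (hpos i)
        nlinarith
      calc n < kseq n i * (n / kseq n i + 1) := h2
        _ ≤ kseq n i * kseq n j := Nat.mul_le_mul_left _ h1
    rw [Mmat, Nat.div_eq_of_lt hbig, mertens_zero]
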